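/- arXiv:2511.05242 — 4 statements merged into one kernel-verified Lean document; each statement's English description precedes it below -/
import Mathlib

section
/- For every integer k ≥ 0 and every integer p with 1 ≤ p ≤ τ, the sequence a satisfies a(kτ+p) = p·a(kτ+1) − (p−1)·a(kτ) + ∑_{q=1}^{p−1} ∑_{j=1}^{q} (b(kτ+j) − b(kτ+j−1)). -/
open Finset MeasureTheory

private lemma tel_sum (b : ℕ → ℝ) (n : ℕ) :
    ∀ q : ℕ, ∑ j ∈ Finset.Icc 1 q, (b (n + j) - b (n + j - 1)) = b (n + q) - b n := by
  intro q
  induction q with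
  | zero => simp
  | succ q ih =>
      rw [Finset.sum_Icc_succ_top (by omega), ih]
      have h : n + (q + 1) - 1 = n + q := by omega
      rw [h]; ring

private lemma not_dvd_aux (τ k r : ℕ) (h1 : 1 ≤ r) (h2 : r < τ) : ¬ τ ∣ (k * τ + r) := by
  intro h
  have hd : τ ∣ r := (Nat.dvd_add_right ⟨k, by ring⟩).mp h
  exact absurd (Nat.le_of_dvd (by omega) hd) (by omega)

theorem recursion_local_expansion
    (τ : ℕ) (hτ : 0 < τ) (ρ : ℝ)
    (hρlo : ((τ : ℝ) - 1) / ((τ : ℝ) + 3) < ρ) (hρhi : ρ < 1)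
    (b : ℕ → ℝ) (a : ℕ → ℝ)
    (ha : ∀ t : ℕ, 1 ≤ t →
      a (t + 1) = (if τ ∣ t then ρ else 1) * (2 * a t - a (t - 1) + b t - b (t - 1)))
 :
    ∀ k p : ℕ, 1 ≤ p → p ≤ τ →
      a (k * τ + p) = p * a (k * τ + 1) - ((p : ℝ) - 1) * a (k * τ)
        + ∑ q ∈ Finset.Icc 1 (p - 1), ∑ j ∈ Finset.Icc 1 q,
            (b (k * τ + j) - b (k * τ + j - 1)) := by
  intro k
  -- strengthen: holds for all p ≤ τ (including p = 0)
  suffices H : ∀ p : ℕ, p ≤ τ →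
      a (k * τ + p) = p * a (k * τ + 1) - ((p : ℝ) - 1) * a (k * τ)
        + ∑ q ∈ Finset.Icc 1 (p - 1), ∑ j ∈ Finset.Icc 1 q,
            (b (k * τ + j) - b (k * τ + j - 1)) by
    intro p _ hpτ; exact H p hpτ
  -- replace inner sums by telescoped values
  have hsum : ∀ m : ℕ, ∑ q ∈ Finset.Icc 1 m, ∑ j ∈ Finset.Icc 1 q,
      (b (k * τ + j) - b (k * τ + j - 1)) =
      ∑ q ∈ Finset.Icc 1 m, (b (k * τ + q) - b (k * τ)) := by
    intro m
    exact Finset.sum_congr rfl fun q _ => tel_sum b (k * τ) q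
  have step : ∀ r : ℕ, 1 ≤ r → r < τ →
      a (k * τ + r + 1) = 2 * a (k * τ + r) - a (k * τ + r - 1)
        + b (k * τ + r) - b (k * τ + r - 1) := by
    intro r h1 h2
    have := ha (k * τ + r) (by omega)
    rw [if_neg (not_dvd_aux τ k r h1 h2)] at this
    linarith [this]
  intro p
  induction p using Nat.strong_induction_on with
  | _ p IH =>
    match p with
    | 0 => intro _; simp
    | 1 => intro _; simp
    | 2 =>
        intro h2
        have hs := step 1 le_rfl (by omega)
        have e1 : k * τ + 1 - 1 = k * τ := by omega
        rw [e1] at hs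
        have : a (k * τ + 2) = 2 * a (k * τ + 1) - a (k * τ)
            + b (k * τ + 1) - b (k * τ) := by
          have e2 : k * τ + 1 + 1 = k * τ + 2 := by omega
          rw [e2] at hs; exact hs
        rw [this]
        norm_num [hsum]
        ring
    | (l + 3) =>
        intro hp
        have ih1 := IH (l + 2) (by omega) (by omega)
        have ih2 := IH (l + 1) (by omega) (by omega)
        have hs := step (l + 2) (by omega) (by omega)
        have e1 : k * τ + (l + 2) - 1 = k * τ + (l + 1) := by omega
        have e2 : k * τ + (l + 2) + 1 = k * τ + (l + 3) := by omega
        rw [e1, e2] at hs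
        rw [hs, ih1, ih2, hsum, hsum]
        have e3 : l + 3 - 1 = l + 2 := rfl
        rw [e3, hsum]
        rw [show l + 2 - 1 = l + 1 from rfl, show l + 1 - 1 = l from rfl]
        rw [Finset.sum_Icc_succ_top (show 1 ≤ l + 2 by omega),
            Finset.sum_Icc_succ_top (show 1 ≤ l + 1 by omega)]
        push_cast
        ring
end

section
/- For every integer k ≥ 0, the sequence a satisfies the closed-form expressions a(kτ+1) = ρ^{k/2}·(F₁₁(k)·a(1) + F₁₂(k)·a(0)) + ∑_{s=0}^{k−1} ρ^{(k−1−s)/2}·(F₁₁(k−1−s)·G₁₁(s) + F₁₂(k−1−s)·G₂₁(s)) and a(kτ) = ρ^{k/2}·(F₂₁(k)·a(1) + F₂₂(k)·a(0)) + ∑_{s=0}^{k−1} ρ^{(k−1−s)/2}·(F₂₁(k−1−s)·G₁₁(s) + F₂₂(k−1−s)·G₂₁(s)). -/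
/-!
Inside a block `kτ ≤ t < (k+1)τ` the damping factor is `1`, so `a (t+1) - a t - b t` is constant
there. Summing over a block (and an Abel summation of the increments of `b`) shows that the state
`x k = (a (kτ+1), a (kτ))` obeys `x (k+1) = M x k + (G₁₁ k, G₂₁ k)` with
`M = [[ρ(τ+1), -ρτ], [τ, 1-τ]]`, hence `x k = M^k x 0 + ∑ M^(k-1-s) (G₁₁ s, G₂₁ s)`.
Since `det M = ρ` and `tr M = 2 √ρ cos θ`, Cayley–Hamilton gives `N² = 2 cos θ N - 1` for
`N = M / √ρ`, and the Chebyshev recursion `sin((s+1)θ) = 2 cos θ sin(sθ) - sin((s-1)θ)` turns this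
into `N^s = (sin(sθ) N - sin((s-1)θ)) / sin θ`, which is the matrix `(F_ij(s))`.
-/

open Finset
open scoped Matrix

theorem sin_smul_pow_eq {A : Type*} [Ring A] [Algebra ℝ A] {N : A} {θ : ℝ}
    (hN : N ^ 2 = (2 * Real.cos θ) • N - 1) (s : ℕ) :
    Real.sin θ • N ^ s = Real.sin (s * θ) • N - Real.sin ((s - 1) * θ) • 1 := by
  induction s with
  | zero => simp [neg_mul, Real.sin_neg]
  | succ s ih =>
    have hsin : Real.sin ((s + 1) * θ) = 2 * Real.cos θ * Real.sin (s * θ)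
        - Real.sin ((s - 1) * θ) := by
      rw [add_mul, sub_mul, one_mul, Real.sin_add, Real.sin_sub]; ring
    calc Real.sin θ • N ^ (s + 1) = N * (Real.sin θ • N ^ s) := by
          rw [pow_succ', mul_smul_comm]
      _ = Real.sin (s * θ) • N ^ 2 - Real.sin ((s - 1) * θ) • N := by
          rw [ih, mul_sub, mul_smul_comm, mul_smul_comm, sq, mul_one]
      _ = _ := by
          push_cast
          rw [hN, add_sub_cancel_right, hsin]
          module

theorem Matrix.sq_eq_trace_smul_sub_det_smul {R : Type*} [CommRing R]
    (A : Matrix (Fin 2) (Fin 2) R) : A ^ 2 = A.trace • A - A.det • 1 := by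
  ext i j
  fin_cases i <;> fin_cases j <;>
    simp [sq, Matrix.mul_apply, Matrix.trace_fin_two, Matrix.det_fin_two] <;> ring

theorem eq_pow_smul_add_sum_of_eq_smul_add {M V : Type*} [Monoid M] [AddCommMonoid V]
    [DistribMulAction M V] (A : M) {x g : ℕ → V} (hx : ∀ k, x (k + 1) = A • x k + g k)
    (k : ℕ) : x k = A ^ k • x 0 + ∑ s ∈ range k, A ^ (k - 1 - s) • g s := by
  induction k with
  | zero => simp
  | succ k ih =>
    have hshift : ∀ s ∈ range k, A • A ^ (k - 1 - s) • g s = A ^ (k + 1 - 1 - s) • g s := by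
      intro s hs
      rw [smul_smul, ← pow_succ', Nat.add_sub_cancel]
      congr 2
      have := mem_range.1 hs
      omega
    rw [hx, ih, smul_add, smul_sum, smul_smul, ← pow_succ', sum_congr rfl hshift,
      sum_range_succ, Nat.add_sub_cancel, Nat.sub_self, pow_zero, one_smul, add_assoc]

theorem sum_Icc_mul_sub_succ {R : Type*} [CommRing R] (w f : ℕ → R) (n : ℕ) :
    ∑ j ∈ Icc 1 (n + 1), w j * (f (n + 1 + 1 - j) - f (n + 1 - j))
      = ∑ j ∈ Icc 1 n, w j * (f (n + 1 - j + 1) - f (n - j + 1)) + w (n + 1) * (f 1 - f 0) := by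
  rw [sum_Icc_succ_top (by omega), Nat.add_sub_cancel_left, Nat.sub_self]
  congr 1
  refine sum_congr rfl fun j hj => ?_
  have := (mem_Icc.1 hj).2
  congr 3 <;> omega

theorem sum_Icc_sub_one_mul_sub {R : Type*} [CommRing R] (f : ℕ → R) (n : ℕ) :
    ∑ j ∈ Icc 1 n, ((j : R) - 1) * (f (n + 1 - j) - f (n - j)) = ∑ m ∈ range n, (f m - f 0) := by
  induction n generalizing f with
  | zero => simp
  | succ n ih =>
    rw [sum_Icc_mul_sub_succ, ih fun m => f (m + 1), sum_range_succ' _ n]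
    simp only [sum_sub_distrib, sum_const, card_range, nsmul_eq_mul, Nat.cast_succ]
    ring

theorem sum_Icc_mul_sub {R : Type*} [CommRing R] (f : ℕ → R) (n : ℕ) :
    ∑ j ∈ Icc 1 n, (j : R) * (f (n + 1 - j) - f (n - j)) = ∑ m ∈ range (n + 1), (f m - f 0) := by
  induction n generalizing f with
  | zero => simp
  | succ n ih =>
    rw [sum_Icc_mul_sub_succ, ih fun m => f (m + 1), sum_range_succ' _ (n + 1)]
    simp only [sum_sub_distrib, sum_const, card_range, nsmul_eq_mul, Nat.cast_succ, zero_add]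
    ring

def IsPeriodicallyDamped (τ : ℕ) (ρ : ℝ) (a b : ℕ → ℝ) : Prop :=
  ∀ t : ℕ, 1 ≤ t → a (t + 1) = (if τ ∣ t then ρ else 1) * (2 * a t - a (t - 1) + b t - b (t - 1))

theorem sub_sub_eq_of_lt_period {τ : ℕ} {ρ : ℝ} {a b : ℕ → ℝ} (ha : IsPeriodicallyDamped τ ρ a b)
    (k : ℕ) {m : ℕ} (hm : m < τ) :
    a (k * τ + m + 1) - a (k * τ + m) - b (k * τ + m) = a (k * τ + 1) - a (k * τ) - b (k * τ) := by
  induction m with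
  | zero => rfl
  | succ m ih =>
    have hndvd : ¬ τ ∣ k * τ + (m + 1) := by
      rw [Nat.dvd_add_right (dvd_mul_left τ k)]
      exact Nat.not_dvd_of_pos_of_lt m.succ_pos hm
    have hrec := ha (k * τ + (m + 1)) (by omega)
    rw [if_neg hndvd, one_mul, ← add_assoc, Nat.add_sub_cancel] at hrec
    rw [← ih (by omega), ← add_assoc, hrec]
    ring

theorem apply_succ_mul_eq {τ : ℕ} {ρ : ℝ} {a b : ℕ → ℝ}
    (ha : IsPeriodicallyDamped τ ρ a b) (k : ℕ) :
    a ((k + 1) * τ) = τ * a (k * τ + 1) - (τ - 1) * a (k * τ)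
      + ∑ m ∈ range τ, (b (k * τ + m) - b (k * τ)) := by
  have hdiff : ∀ m ∈ range τ, a (k * τ + (m + 1)) - a (k * τ + m)
      = a (k * τ + 1) - a (k * τ) + (b (k * τ + m) - b (k * τ)) := by
    intro m hm
    linear_combination sub_sub_eq_of_lt_period ha k (mem_range.1 hm)
  have htel := sum_range_sub (fun m => a (k * τ + m)) τ
  rw [sum_congr rfl hdiff, sum_add_distrib, sum_const, card_range, nsmul_eq_mul,
    add_zero] at htel
  rw [add_one_mul]
  linear_combination -htel

theorem apply_succ_mul_add_one_eq {τ : ℕ} (hτ : 0 < τ) {ρ : ℝ} {a b : ℕ → ℝ}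
    (ha : IsPeriodicallyDamped τ ρ a b) (k : ℕ) :
    a ((k + 1) * τ + 1) = ρ * ((τ + 1) * a (k * τ + 1) - τ * a (k * τ)
      + ∑ m ∈ range (τ + 1), (b (k * τ + m) - b (k * τ))) := by
  obtain ⟨n, rfl⟩ : ∃ n, τ = n + 1 := ⟨τ - 1, by omega⟩
  have hrec := ha ((k + 1) * (n + 1)) (Nat.succ_le_of_lt (by positivity))
  have hend := apply_succ_mul_eq ha k
  rw [if_pos (dvd_mul_left _ _), add_one_mul, ← add_assoc, Nat.add_sub_cancel] at hrec
  rw [add_one_mul, ← add_assoc] at hend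
  rw [add_one_mul, ← add_assoc, hrec, sum_range_succ _ (n + 1)]
  push_cast at hend ⊢
  linear_combination ρ * hend + ρ * sub_sub_eq_of_lt_period ha k n.lt_succ_self

def transferMatrix (τ : ℕ) (ρ : ℝ) : Matrix (Fin 2) (Fin 2) ℝ :=
  !![ρ * (τ + 1), -(ρ * τ); τ, -((τ : ℝ) - 1)]

/-- The matrix `(F_ij(s))` of the statement; it is `(M / √ρ)^s` for `M = transferMatrix τ ρ`. -/
noncomputable def normalizedTransferPow (τ : ℕ) (ρ θ : ℝ) (s : ℕ) : Matrix (Fin 2) (Fin 2) ℝ :=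
  !![Real.sin (((s : ℝ) + 1) * θ) / Real.sin θ
      + ((τ : ℝ) - 1) * Real.sin ((s : ℝ) * θ) / (Real.sqrt ρ * Real.sin θ),
    -((τ : ℝ) * Real.sqrt ρ * Real.sin ((s : ℝ) * θ) / Real.sin θ);
    (τ : ℝ) * Real.sin ((s : ℝ) * θ) / (Real.sqrt ρ * Real.sin θ),
    -(Real.sin (((s : ℝ) - 1) * θ) / Real.sin θ)
      - ((τ : ℝ) - 1) * Real.sin ((s : ℝ) * θ) / (Real.sqrt ρ * Real.sin θ)]

theorem transferMatrix_pow {τ : ℕ} {ρ θ : ℝ} (hρ : 0 < ρ)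
    (hcos : Real.cos θ = (ρ * (τ + 1) + 1 - τ) / (2 * Real.sqrt ρ)) (hsin : Real.sin θ ≠ 0)
    (s : ℕ) : transferMatrix τ ρ ^ s = Real.sqrt ρ ^ s • normalizedTransferPow τ ρ θ s := by
  obtain ⟨r, hr, rfl⟩ : ∃ r, 0 < r ∧ ρ = r ^ 2 :=
    ⟨√ρ, Real.sqrt_pos.2 hρ, (Real.sq_sqrt hρ.le).symm⟩
  rw [Real.sqrt_sq hr.le] at hcos ⊢
  set N := r⁻¹ • transferMatrix τ (r ^ 2)
  have hM : transferMatrix τ (r ^ 2) = r • N := by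
    rw [smul_smul, mul_inv_cancel₀ hr.ne', one_smul]
  have htrace : N.trace = 2 * Real.cos θ := by
    rw [Matrix.trace_smul, transferMatrix, Matrix.trace_fin_two_of, hcos, smul_eq_mul]
    field_simp
    ring
  have hdet : N.det = 1 := by
    rw [Matrix.det_smul, Fintype.card_fin, transferMatrix, Matrix.det_fin_two_of]
    field_simp
    ring
  have hN : N ^ 2 = (2 * Real.cos θ) • N - 1 := by
    rw [Matrix.sq_eq_trace_smul_sub_det_smul, htrace, hdet, one_smul]
  have htrig : r * (Real.sin ((s + 1) * θ) + Real.sin ((s - 1) * θ))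
      = (r ^ 2 * (τ + 1) + 1 - τ) * Real.sin (s * θ) := by
    rw [add_mul, sub_mul, one_mul, Real.sin_add, Real.sin_sub, hcos]
    field_simp
    ring
  have hsin_smul : Real.sin θ • normalizedTransferPow τ (r ^ 2) θ s
      = Real.sin (s * θ) • N - Real.sin ((s - 1) * θ) • 1 := by
    ext i j
    fin_cases i <;> fin_cases j <;>
      simp [N, transferMatrix, normalizedTransferPow, Real.sqrt_sq hr.le] <;>
      field_simp
    · rw [mul_comm θ]
      linear_combination htrig
    · ring
  rw [hM, smul_pow,
    (smul_right_injective _ hsin).eq_iff.1 ((sin_smul_pow_eq hN s).trans hsin_smul.symm)]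

theorem recursion_closed_form_general
    (τ : ℕ) (hτ : 0 < τ) (ρ : ℝ)
    (hρlo : ((τ : ℝ) - 1) / ((τ : ℝ) + 3) < ρ)
    (b : ℕ → ℝ) (a : ℕ → ℝ)
    (ha : ∀ t : ℕ, 1 ≤ t →
      a (t + 1) = (if τ ∣ t then ρ else 1) * (2 * a t - a (t - 1) + b t - b (t - 1)))
    (θ : ℝ) (hθ : θ ∈ Set.Ioo 0 Real.pi)
    (hcos : Real.cos θ = (ρ * (τ + 1) + 1 - τ) / (2 * Real.sqrt ρ))
    (F11 F12 F21 F22 : ℕ → ℝ)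
    (hF11 : F11 = fun (s : ℕ) => Real.sin (((s : ℝ) + 1) * θ) / Real.sin θ
      + ((τ : ℝ) - 1) * Real.sin ((s : ℝ) * θ) / (Real.sqrt ρ * Real.sin θ))
    (hF12 : F12 = fun (s : ℕ) => -((τ : ℝ) * Real.sqrt ρ * Real.sin ((s : ℝ) * θ) / Real.sin θ))
    (hF21 : F21 = fun (s : ℕ) => (τ : ℝ) * Real.sin ((s : ℝ) * θ) / (Real.sqrt ρ * Real.sin θ))
    (hF22 : F22 = fun (s : ℕ) => -(Real.sin (((s : ℝ) - 1) * θ) / Real.sin θ)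
      - ((τ : ℝ) - 1) * Real.sin ((s : ℝ) * θ) / (Real.sqrt ρ * Real.sin θ))
    (G11 G21 : ℕ → ℝ)
    (hG11 : G11 = fun s => ρ * ∑ j ∈ Finset.Icc 1 τ,
        (j : ℝ) * (b (s * τ + (τ + 1 - j)) - b (s * τ + (τ - j))))
    (hG21 : G21 = fun s => ∑ j ∈ Finset.Icc 1 τ,
        ((j : ℝ) - 1) * (b (s * τ + (τ + 1 - j)) - b (s * τ + (τ - j)))) :
    ∀ k : ℕ,
      a (k * τ + 1) = Real.sqrt ρ ^ k * (F11 k * a 1 + F12 k * a 0)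
        + ∑ s ∈ Finset.range k, Real.sqrt ρ ^ (k - 1 - s) *
            (F11 (k - 1 - s) * G11 s + F12 (k - 1 - s) * G21 s) ∧
      a (k * τ) = Real.sqrt ρ ^ k * (F21 k * a 1 + F22 k * a 0)
        + ∑ s ∈ Finset.range k, Real.sqrt ρ ^ (k - 1 - s) *
            (F21 (k - 1 - s) * G11 s + F22 (k - 1 - s) * G21 s) := by
  have hρ : 0 < ρ :=
    (div_nonneg (sub_nonneg.2 (Nat.one_le_cast.2 hτ)) (by positivity)).trans_lt hρlo
  have hsin : Real.sin θ ≠ 0 := (Real.sin_pos_of_pos_of_lt_pi hθ.1 hθ.2).ne'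
  have hstep : ∀ k, ![a ((k + 1) * τ + 1), a ((k + 1) * τ)]
      = transferMatrix τ ρ *ᵥ ![a (k * τ + 1), a (k * τ)] + ![G11 k, G21 k] := by
    intro k
    rw [apply_succ_mul_add_one_eq hτ ha k, apply_succ_mul_eq ha k, hG11, hG21]
    simp only [sum_Icc_mul_sub (fun m => b (k * τ + m)),
      sum_Icc_sub_one_mul_sub (fun m => b (k * τ + m))]
    ext i
    fin_cases i <;> simp [transferMatrix] <;> ring
  intro k
  have hk := eq_pow_smul_add_sum_of_eq_smul_add (Matrix.toLin' (transferMatrix τ ρ))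
    (x := fun k => ![a (k * τ + 1), a (k * τ)]) (g := fun k => ![G11 k, G21 k])
    (fun k => by rw [Module.End.smul_def, Matrix.toLin'_apply]; exact hstep k) k
  simp only [← Matrix.toLin'_pow, Module.End.smul_def, Matrix.toLin'_apply,
    transferMatrix_pow hρ hcos hsin, Matrix.smul_mulVec] at hk
  have hF : ∀ s, normalizedTransferPow τ ρ θ s = !![F11 s, F12 s; F21 s, F22 s] := by
    subst hF11 hF12 hF21 hF22; intro s; rfl
  simp only [hF] at hk
  constructor
  · simpa [Finset.sum_apply, mul_add, add_mul, mul_comm, mul_left_comm] using congrFun hk 0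
  · simpa [Finset.sum_apply, mul_add, add_mul, mul_comm, mul_left_comm] using congrFun hk 1

theorem recursion_closed_form
    (τ : ℕ) (hτ : 0 < τ) (ρ : ℝ)
    (hρlo : ((τ : ℝ) - 1) / ((τ : ℝ) + 3) < ρ) (hρhi : ρ < 1)
    (b : ℕ → ℝ) (a : ℕ → ℝ)
    (ha : ∀ t : ℕ, 1 ≤ t →
      a (t + 1) = (if τ ∣ t then ρ else 1) * (2 * a t - a (t - 1) + b t - b (t - 1)))
    (θ : ℝ) (hθ : θ ∈ Set.Ioo 0 Real.pi)
    (hcos : Real.cos θ = (ρ * (τ + 1) + 1 - τ) / (2 * Real.sqrt ρ))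
    (hsin : Real.sin θ = Real.sqrt (4 * ρ - (ρ * (τ + 1) + 1 - τ) ^ 2) / (2 * Real.sqrt ρ))
    (F11 F12 F21 F22 : ℕ → ℝ)
    (hF11 : F11 = fun (s : ℕ) => Real.sin (((s : ℝ) + 1) * θ) / Real.sin θ
      + ((τ : ℝ) - 1) * Real.sin ((s : ℝ) * θ) / (Real.sqrt ρ * Real.sin θ))
    (hF12 : F12 = fun (s : ℕ) => -((τ : ℝ) * Real.sqrt ρ * Real.sin ((s : ℝ) * θ) / Real.sin θ))
    (hF21 : F21 = fun (s : ℕ) => (τ : ℝ) * Real.sin ((s : ℝ) * θ) / (Real.sqrt ρ * Real.sin θ))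
    (hF22 : F22 = fun (s : ℕ) => -(Real.sin (((s : ℝ) - 1) * θ) / Real.sin θ)
      - ((τ : ℝ) - 1) * Real.sin ((s : ℝ) * θ) / (Real.sqrt ρ * Real.sin θ))
    (G11 G21 : ℕ → ℝ)
    (hG11 : G11 = fun s => ρ * ∑ j ∈ Finset.Icc 1 τ,
        (j : ℝ) * (b (s * τ + (τ + 1 - j)) - b (s * τ + (τ - j))))
    (hG21 : G21 = fun s => ∑ j ∈ Finset.Icc 1 τ,
        ((j : ℝ) - 1) * (b (s * τ + (τ + 1 - j)) - b (s * τ + (τ - j)))) :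
    ∀ k : ℕ,
      a (k * τ + 1) = Real.sqrt ρ ^ k * (F11 k * a 1 + F12 k * a 0)
        + ∑ s ∈ Finset.range k, Real.sqrt ρ ^ (k - 1 - s) *
            (F11 (k - 1 - s) * G11 s + F12 (k - 1 - s) * G21 s) ∧
      a (k * τ) = Real.sqrt ρ ^ k * (F21 k * a 1 + F22 k * a 0)
        + ∑ s ∈ Finset.range k, Real.sqrt ρ ^ (k - 1 - s) *
            (F21 (k - 1 - s) * G11 s + F22 (k - 1 - s) * G21 s) :=
  recursion_closed_form_general τ hτ ρ hρlo b a ha θ hθ hcos F11 F12 F21 F22 hF11 hF12 hF21 hF22 G11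
    G21 hG11 hG21
end

section
/- If τ is a positive integer and ρ is a real number with (τ−1)/(τ+3) < ρ < 1, then (ρ(τ+1)+(1−τ))² − 4ρ < 0; consequently, the quadratic equation μ² − (ρ(τ+1)+1−τ)·μ + ρ = 0 has two non-real complex-conjugate roots μ₁, μ₂ ∈ ℂ, each of modulus |μ₁| = |μ₂| = √ρ < 1. -/
open Complex ComplexConjugate

/-! The discriminant factors as `(ρ - 1) * ((τ + 1)² ρ - (τ - 1)²)`, and the lower bound on `ρ`
forces the second factor to be positive. A monic real quadratic with negative discriminant is
`(z - μ) (z - μ̄)` for a non-real `μ` with `2 Re μ` the middle coefficient and `|μ|² = μ μ̄` the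
constant one, so both roots have modulus `√ρ`. -/

lemma sq_lt_sq_mul_of_div_lt {t ρ : ℝ} (ht : 1 ≤ t) (hρ : (t - 1) / (t + 3) < ρ) :
    (t - 1) ^ 2 < (t + 1) ^ 2 * ρ := by
  have ht3 : 0 < t + 3 := by linarith
  have hρ' : t - 1 < ρ * (t + 3) := (div_lt_iff₀ ht3).1 hρ
  -- `(t + 1)² (t - 1) - (t - 1)² (t + 3) = 4 (t - 1) ≥ 0`
  nlinarith [mul_lt_mul_of_pos_left hρ' (by positivity : (0 : ℝ) < (t + 1) ^ 2)]

lemma discrim_neg_of_div_lt {t ρ : ℝ} (ht : 1 ≤ t) (hlo : (t - 1) / (t + 3) < ρ) (hhi : ρ < 1) :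
    (ρ * (t + 1) + (1 - t)) ^ 2 - 4 * ρ < 0 :=
  calc (ρ * (t + 1) + (1 - t)) ^ 2 - 4 * ρ = (ρ - 1) * ((t + 1) ^ 2 * ρ - (t - 1) ^ 2) := by ring
    _ < 0 := mul_neg_of_neg_of_pos (by linarith) (by linarith [sq_lt_sq_mul_of_div_lt ht hlo])

lemma Complex.sub_mul_sub_conj (μ z : ℂ) :
    (z - μ) * (z - conj μ) = z ^ 2 - ((2 * μ.re : ℝ) : ℂ) * z + (normSq μ : ℂ) := by
  rw [← add_conj, ← mul_conj]
  ring

lemma Complex.sq_sub_re_add_normSq_eq_zero_iff (μ z : ℂ) :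
    z ^ 2 - ((2 * μ.re : ℝ) : ℂ) * z + (normSq μ : ℂ) = 0 ↔ z = μ ∨ z = conj μ := by
  rw [← sub_mul_sub_conj, mul_eq_zero, sub_eq_zero, sub_eq_zero]

lemma Complex.exists_re_normSq_of_sq_lt {a c : ℝ} (h : a ^ 2 < c) :
    ∃ μ : ℂ, μ.re = a ∧ normSq μ = c ∧ μ.im ≠ 0 := by
  have hpos : 0 < c - a ^ 2 := sub_pos.2 h
  refine ⟨⟨a, √(c - a ^ 2)⟩, rfl, ?_, (Real.sqrt_pos.2 hpos).ne'⟩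
  rw [normSq_mk, Real.mul_self_sqrt hpos.le]
  ring

theorem quadratic_complex_roots
    (τ : ℕ) (hτ : 0 < τ) (ρ : ℝ)
    (hρlo : ((τ : ℝ) - 1) / ((τ : ℝ) + 3) < ρ) (hρhi : ρ < 1) :
    (ρ * ((τ : ℝ) + 1) + (1 - (τ : ℝ))) ^ 2 - 4 * ρ < 0 ∧
    ∃ μ₁ μ₂ : ℂ,
      μ₂ = (starRingEnd ℂ) μ₁ ∧ μ₁.im ≠ 0 ∧ μ₁ ≠ μ₂ ∧
      (∀ μ : ℂ, μ ^ 2 - ((ρ * ((τ : ℝ) + 1) + 1 - (τ : ℝ) : ℝ) : ℂ) * μ + (ρ : ℂ) = 0 ↔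
        μ = μ₁ ∨ μ = μ₂) ∧
      ‖μ₁‖ = Real.sqrt ρ ∧ ‖μ₂‖ = Real.sqrt ρ ∧ Real.sqrt ρ < 1 := by
  have hdisc := discrim_neg_of_div_lt (Nat.one_le_cast.2 hτ) hρlo hρhi
  set b : ℝ := ρ * ((τ : ℝ) + 1) + 1 - τ
  obtain ⟨μ, hre, hnormSq, him⟩ := exists_re_normSq_of_sq_lt (a := b / 2) (c := ρ) <| by
    linarith [show b = ρ * ((τ : ℝ) + 1) + (1 - τ) by ring]
  have hb : b = 2 * μ.re := by rw [hre]; ring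
  have hnorm : ‖μ‖ = √ρ := by rw [norm_def, hnormSq]
  refine ⟨hdisc, μ, conj μ, rfl, him, fun h => him (conj_eq_iff_im.1 h.symm), fun z => ?_,
    hnorm, by rw [norm_conj, hnorm], (Real.sqrt_lt' one_pos).2 (by linarith)⟩
  rw [hb, ← hnormSq]
  exact sq_sub_re_add_normSq_eq_zero_iff μ z
end

section
/- For every integer T ≥ 1, the MILE iterates satisfy ∑_{t=1}^{T} ( ‖∇f(X̄(t))‖² + (1 − Lα)·‖∇̄f(X(t))‖² ) ≤ (2/α)·(f(X̄(1)) − f(x*)) + (L²/N)·∑_{t=1}^{T} ∑_{i=1}^{N} ‖X̄(t) − x_i(t)‖². -/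
/-!
Because `W 𝟙 = 𝟙`, right multiplication by any `W(t)` preserves the sum of the agents' iterates,
so the means obey the two-step recurrence
`X̄(t+2) = 2 X̄(t+1) - X̄(t) - α ∇̄f(X(t+1)) + α ∇̄f(X(t))`. As `X(0)` is itself a gradient step
from `X(-1)`, this collapses to the inexact gradient descent `X̄(t+1) = X̄(t) - α ∇̄f(X(t))`.
The descent lemma for the `L`-smooth `f`, together with `2⟪a, b⟫ = ‖a‖² + ‖b‖² - ‖a - b‖²`,
bounds each step by the decrease of `f` plus the error `‖∇f(X̄(t)) - ∇̄f(X(t))‖²`, which the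
Lipschitz gradients and Jensen's inequality bound by `(L² / N) ∑ᵢ ‖X̄(t) - xᵢ(t)‖²`.
Summing, the decrease of `f` telescopes down to `f(x*)`.
-/

open Finset
open scoped NNReal

section Smooth

variable {E : Type*} [NormedAddCommGroup E] [InnerProductSpace ℝ E] [CompleteSpace E]
  {g : E → ℝ} {K : ℝ≥0}

theorem le_add_inner_add_sq_of_lipschitzWith_gradient (hg : Differentiable ℝ g)
    (hK : LipschitzWith K (gradient g)) (x y : E) :
    g y ≤ g x + inner ℝ (gradient g x) (y - x) + K / 2 * ‖y - x‖ ^ 2 := by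
  set v := y - x
  have hφ : ∀ s : ℝ,
      HasDerivAt (fun s : ℝ => g (x + s • v)) (inner ℝ (gradient g (x + s • v)) v) s :=
    fun s => (hg _).hasGradientAt.hasFDerivAt.comp_hasDerivAt s
      (((hasDerivAt_id s).smul_const v).const_add x |>.congr_deriv (one_smul ℝ v))
  have hB : ∀ s : ℝ,
      HasDerivAt (fun s : ℝ => g x + s * inner ℝ (gradient g x) v + K / 2 * s ^ 2 * ‖v‖ ^ 2)
      (inner ℝ (gradient g x) v + K * s * ‖v‖ ^ 2) s := by
    intro s
    refine ((((hasDerivAt_id s).mul_const (inner ℝ (gradient g x) v)).const_add (g x)).add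
      ((((hasDerivAt_pow 2 s).const_mul ((K : ℝ) / 2)).mul_const (‖v‖ ^ 2)))).congr_deriv ?_
    push_cast
    ring
  have hbound : ∀ s ∈ Set.Ico (0 : ℝ) 1,
      inner ℝ (gradient g (x + s • v)) v ≤ inner ℝ (gradient g x) v + K * s * ‖v‖ ^ 2 := by
    rintro s ⟨hs, -⟩
    have hlip : ‖gradient g (x + s • v) - gradient g x‖ ≤ K * (s * ‖v‖) := by
      simpa [norm_smul, abs_of_nonneg hs] using hK.norm_sub_le (x + s • v) x
    have := real_inner_le_norm (gradient g (x + s • v) - gradient g x) v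
    rw [inner_sub_left] at this
    nlinarith [norm_nonneg v]
  -- compare `s ↦ g (x + s • v)` with its quadratic upper model on `[0, 1]`
  have key := image_le_of_deriv_right_le_deriv_boundary (a := 0) (b := 1)
    (fun s _ => (hφ s).continuousAt.continuousWithinAt) (fun s _ => (hφ s).hasDerivWithinAt)
    (by simp) (fun s _ => (hB s).continuousAt.continuousWithinAt)
    (fun s _ => (hB s).hasDerivWithinAt) hbound (x := 1) (by simp)
  simpa [v] using key

theorem inexact_gradient_step (hg : Differentiable ℝ g) (hK : LipschitzWith K (gradient g))
    (x d : E) {α : ℝ} (hα : 0 < α) :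
    ‖gradient g x‖ ^ 2 + (1 - K * α) * ‖d‖ ^ 2 ≤
      2 / α * (g x - g (x - α • d)) + ‖gradient g x - d‖ ^ 2 := by
  have hdesc := le_add_inner_add_sq_of_lipschitzWith_gradient hg hK x (x - α • d)
  rw [sub_sub_cancel_left, inner_neg_right, real_inner_smul_right, norm_neg, norm_smul,
    Real.norm_eq_abs, abs_of_pos hα] at hdesc
  have hgain : 2 * inner ℝ (gradient g x) d - K * α * ‖d‖ ^ 2 ≤
      2 / α * (g x - g (x - α • d)) :=
    calc 2 * inner ℝ (gradient g x) d - K * α * ‖d‖ ^ 2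
        = 2 / α * (α * inner ℝ (gradient g x) d - K / 2 * (α * ‖d‖) ^ 2) := by field_simp
      _ ≤ 2 / α * (g x - g (x - α • d)) :=
        mul_le_mul_of_nonneg_left (by linarith) (by positivity)
  rw [norm_sub_sq_real]
  linarith

theorem hasGradientAt_const_mul_sum {ι : Type*} {s : Finset ι} {f : ι → E → ℝ} {x : E}
    (hf : ∀ i ∈ s, DifferentiableAt ℝ (f i) x) (c : ℝ) :
    HasGradientAt (fun y => c * ∑ i ∈ s, f i y) (c • ∑ i ∈ s, gradient (f i) x) x := by
  rw [hasGradientAt_iff_hasFDerivAt, map_smul, map_sum]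
  exact (HasFDerivAt.fun_sum fun i hi => (hf i hi).hasGradientAt.hasFDerivAt).const_mul c

end Smooth

section Average

variable {ι : Type*} [Fintype ι] {E F : Type*} [NormedAddCommGroup E] [NormedAddCommGroup F]
  [NormedSpace ℝ F]

theorem norm_sq_average_le (v : ι → F) :
    ‖(Fintype.card ι : ℝ)⁻¹ • ∑ i, v i‖ ^ 2 ≤ (Fintype.card ι : ℝ)⁻¹ * ∑ i, ‖v i‖ ^ 2 := by
  set c : ℝ := (Fintype.card ι : ℝ)⁻¹
  have hc : 0 ≤ c := by positivity
  calc ‖c • ∑ i, v i‖ ^ 2 ≤ (c * ∑ i, ‖v i‖) ^ 2 := by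
        rw [norm_smul, Real.norm_of_nonneg hc]
        gcongr
        exact norm_sum_le _ _
    _ ≤ c ^ 2 * (Fintype.card ι * ∑ i, ‖v i‖ ^ 2) := by
        rw [mul_pow]
        gcongr
        simpa using sq_sum_le_card_mul_sum_sq (s := univ) (f := fun i => ‖v i‖)
    _ = c * (Fintype.card ι * c) * ∑ i, ‖v i‖ ^ 2 := by ring
    _ ≤ c * ∑ i, ‖v i‖ ^ 2 := by
        gcongr
        exact mul_le_of_le_one_right hc mul_inv_le_one

theorem norm_average_sub_average_sq_le {g : ι → E → F} {K : ℝ≥0}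
    (hg : ∀ i, LipschitzWith K (g i)) (a : E) (x : ι → E) :
    ‖(Fintype.card ι : ℝ)⁻¹ • ∑ i, g i a - (Fintype.card ι : ℝ)⁻¹ • ∑ i, g i (x i)‖ ^ 2 ≤
      K ^ 2 * (Fintype.card ι : ℝ)⁻¹ * ∑ i, ‖a - x i‖ ^ 2 := by
  rw [← smul_sub, ← sum_sub_distrib, mul_comm _ (_ : ℝ)⁻¹, mul_assoc, mul_sum]
  refine (norm_sq_average_le _).trans ?_
  gcongr with i
  rw [← mul_pow]
  gcongr
  exact (hg i).norm_sub_le a (x i)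

theorem lipschitzWith_average {g : ι → E → F} {K : ℝ≥0} (hg : ∀ i, LipschitzWith K (g i)) :
    LipschitzWith K (fun a => (Fintype.card ι : ℝ)⁻¹ • ∑ i, g i a) := by
  refine LipschitzWith.of_dist_le_mul fun a b => ?_
  rw [dist_eq_norm, dist_eq_norm,
    ← pow_le_pow_iff_left₀ (norm_nonneg _) (by positivity) two_ne_zero]
  calc _ ≤ K ^ 2 * (Fintype.card ι : ℝ)⁻¹ * ∑ _i : ι, ‖a - b‖ ^ 2 :=
        norm_average_sub_average_sq_le hg a fun _ => b
    _ = K ^ 2 * ((Fintype.card ι : ℝ)⁻¹ * Fintype.card ι) * ‖a - b‖ ^ 2 := by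
        rw [sum_const, card_univ, nsmul_eq_mul]
        ring
    _ ≤ (K * ‖a - b‖) ^ 2 := by
        rw [mul_pow]
        gcongr
        exact mul_le_of_le_one_right (by positivity) inv_mul_le_one

end Average

theorem Matrix.sum_row_eq_one_of_sub_mulVec_eq_zero {ι R : Type*} [Fintype ι] [DecidableEq ι]
    [Ring R] {W : Matrix ι ι R} (h : (1 - W).mulVec (fun _ => 1) = 0) (i : ι) :
    ∑ j, W i j = 1 := by
  have hi := congrFun h i
  simp only [Matrix.mulVec, dotProduct, Matrix.sub_apply, Matrix.one_apply, mul_one,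
    sum_sub_distrib, sum_ite_eq, mem_univ, if_true, Pi.zero_apply] at hi
  exact (sub_eq_zero.mp hi).symm

theorem sum_sum_smul_eq_sum_of_sum_row_eq_one {ι κ R A : Type*} [Fintype ι] [Fintype κ]
    [Semiring R] [AddCommMonoid A] [Module R A] {M : Matrix ι κ R} (hM : ∀ i, ∑ j, M i j = 1)
    (v : ι → A) : ∑ j, ∑ i, M i j • v i = ∑ i, v i := by
  rw [sum_comm]
  simp_rw [← sum_smul, hM, one_smul]

theorem succ_eq_sub_of_two_step_recurrence {A : Type*} [AddCommGroup A] {u g : ℕ → A}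
    {u₀ g₀ : A} (h₀ : u 0 = u₀ - g₀) (h₁ : u 1 = 2 • u 0 - u₀ - g 0 + g₀)
    (h : ∀ t, u (t + 2) = 2 • u (t + 1) - u t - g (t + 1) + g t) (t : ℕ) :
    u (t + 1) = u t - g t := by
  induction t with
  | zero => rw [h₁, h₀, two_nsmul]; abel
  | succ t ih => rw [h t, ih, two_nsmul]; abel

theorem sum_succ_eq_sum_sub_of_mile {ι R E : Type*} [Fintype ι] [Ring R] [AddCommGroup E]
    [Module R E] {Wt : ℕ → Matrix ι ι R} (hWt : ∀ t i, ∑ j, Wt t i j = 1) {G : ι → E → E}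
    {α : R} {Xm1 : ι → E} {X : ℕ → ι → E} (hX0 : ∀ i, X 0 i = Xm1 i - α • G i (Xm1 i))
    (hX1 : ∀ j, X 1 j = ∑ i, Wt 0 i j •
      (2 • X 0 i - Xm1 i - α • G i (X 0 i) + α • G i (Xm1 i)))
    (hXrec : ∀ t j, X (t + 2) j = ∑ i, Wt (t + 1) i j •
      (2 • X (t + 1) i - X t i - α • G i (X (t + 1) i) + α • G i (X t i)))
    (t : ℕ) : ∑ i, X (t + 1) i = ∑ i, X t i - α • ∑ i, G i (X t i) := by
  have h₀ : ∑ i, X 0 i = ∑ i, Xm1 i - α • ∑ i, G i (Xm1 i) := by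
    simp only [hX0, sum_sub_distrib, smul_sum]
  have h₁ : ∑ i, X 1 i = 2 • ∑ i, X 0 i - ∑ i, Xm1 i - α • ∑ i, G i (X 0 i)
      + α • ∑ i, G i (Xm1 i) := by
    rw [sum_congr rfl fun j _ => hX1 j, sum_sum_smul_eq_sum_of_sum_row_eq_one (hWt 0)]
    simp only [sum_add_distrib, sum_sub_distrib, smul_sum]
  have h : ∀ t, ∑ i, X (t + 2) i = 2 • ∑ i, X (t + 1) i - ∑ i, X t i
      - α • ∑ i, G i (X (t + 1) i) + α • ∑ i, G i (X t i) := by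
    intro t
    rw [sum_congr rfl fun j _ => hXrec t j, sum_sum_smul_eq_sum_of_sum_row_eq_one (hWt _)]
    simp only [sum_add_distrib, sum_sub_distrib, smul_sum]
  exact succ_eq_sub_of_two_step_recurrence (u := fun t => ∑ i, X t i)
    (g := fun t => α • ∑ i, G i (X t i)) h₀ h₁ h t

theorem sum_Icc_le_of_le_mul_sub_succ {a b φ : ℕ → ℝ} {c m : ℝ} (hc : 0 ≤ c)
    (h : ∀ t, a t ≤ c * (φ t - φ (t + 1)) + b t) (hm : ∀ t, m ≤ φ t) {T : ℕ} (hT : 1 ≤ T) :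
    ∑ t ∈ Icc 1 T, a t ≤ c * (φ 1 - m) + ∑ t ∈ Icc 1 T, b t := by
  have htel : ∑ t ∈ Icc 1 T, (φ t - φ (t + 1)) = φ 1 - φ (T + 1) := by
    rw [← neg_sub (φ (T + 1)), ← sum_Icc_sub hT, ← sum_neg_distrib]
    simp_rw [neg_sub]
  calc ∑ t ∈ Icc 1 T, a t ≤ ∑ t ∈ Icc 1 T, (c * (φ t - φ (t + 1)) + b t) :=
        sum_le_sum fun t _ => h t
    _ = c * (φ 1 - φ (T + 1)) + ∑ t ∈ Icc 1 T, b t := by rw [sum_add_distrib, ← mul_sum, htel]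
    _ ≤ c * (φ 1 - m) + ∑ t ∈ Icc 1 T, b t := by gcongr; exact hm _

theorem mile_descent_sum_bound_general
    (n N : ℕ)
    (f : Fin N → EuclideanSpace ℝ (Fin n) → ℝ)
    (L : ℝ) (hL : 0 < L)
    (hdiff : ∀ i, Differentiable ℝ (f i))
    (hsmooth : ∀ i, LipschitzWith L.toNNReal (gradient (f i)))
    (F : EuclideanSpace ℝ (Fin n) → ℝ)
    (hF : F = fun x => (1 / (N : ℝ)) * ∑ i, f i x)
    (xstar : EuclideanSpace ℝ (Fin n))
    (hxstar : ∀ x, F xstar ≤ F x)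
    (W : Matrix (Fin N) (Fin N) ℝ)
    (hWnull : ∀ v : Fin N → ℝ, ((1 : Matrix (Fin N) (Fin N) ℝ) - W).mulVec v = 0 ↔ ∃ c : ℝ, v = fun _ => c)
    (τ : ℕ)
    (ξ : ℝ)
    (α : ℝ) (hα0 : 0 < α)
    (Wt : ℕ → Matrix (Fin N) (Fin N) ℝ)
    (hWt : Wt = fun t => if τ ∣ t then (1 - ξ) • (1 : Matrix (Fin N) (Fin N) ℝ) + ξ • W else 1)
    (Xm1 : Fin N → EuclideanSpace ℝ (Fin n))
    (X : ℕ → Fin N → EuclideanSpace ℝ (Fin n))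
    (hX0 : ∀ i, X 0 i = Xm1 i - α • gradient (f i) (Xm1 i))
    (hX1 : ∀ j, X 1 j = ∑ i, Wt 0 i j •
        (2 • X 0 i - Xm1 i - α • gradient (f i) (X 0 i) + α • gradient (f i) (Xm1 i)))
    (hXrec : ∀ t : ℕ, ∀ j, X (t + 2) j = ∑ i, Wt (t + 1) i j •
        (2 • X (t + 1) i - X t i - α • gradient (f i) (X (t + 1) i) + α • gradient (f i) (X t i)))
    (Xbar : ℕ → EuclideanSpace ℝ (Fin n))
    (hXbar : Xbar = fun t => (1 / (N : ℝ)) • ∑ i, X t i)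
    (gbar : ℕ → EuclideanSpace ℝ (Fin n))
    (hgbar : gbar = fun t => (1 / (N : ℝ)) • ∑ i, gradient (f i) (X t i))
    (T : ℕ) (hT : 1 ≤ T) :
    ∑ t ∈ Finset.Icc 1 T, (‖gradient F (Xbar t)‖ ^ 2 + (1 - L * α) * ‖gbar t‖ ^ 2) ≤
      2 / α * (F (Xbar 1) - F xstar)
      + L ^ 2 / N * ∑ t ∈ Finset.Icc 1 T, ∑ i, ‖Xbar t - X t i‖ ^ 2 := by
  have hLK : (L.toNNReal : ℝ) = L := Real.coe_toNNReal L hL.le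
  have hcard : (Fintype.card (Fin N) : ℝ)⁻¹ = 1 / N := by rw [Fintype.card_fin, one_div]
  have hWrow := Matrix.sum_row_eq_one_of_sub_mulVec_eq_zero ((hWnull _).mpr ⟨1, rfl⟩)
  have hWt_row : ∀ t i, ∑ j, Wt t i j = 1 := by
    intro t i
    simp only [hWt]
    split_ifs <;> simp [Matrix.one_apply, sum_add_distrib, ← mul_sum, hWrow]
  have hmean : ∀ t, Xbar (t + 1) = Xbar t - α • gbar t := by
    intro t
    simp only [hXbar, hgbar, sum_succ_eq_sum_sub_of_mile hWt_row hX0 hX1 hXrec t, smul_sub,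
      smul_comm _ α]
  have hgradF : ∀ x, HasGradientAt F ((1 / (N : ℝ)) • ∑ i, gradient (f i) x) x := fun x => by
    rw [hF]
    exact hasGradientAt_const_mul_sum (fun i _ => hdiff i x) _
  have hFdiff : Differentiable ℝ F := fun x => (hgradF x).differentiableAt
  have hFlip : LipschitzWith L.toNNReal (gradient F) := by
    rw [gradient_eq hgradF, ← hcard]
    exact lipschitzWith_average hsmooth
  have hstep : ∀ t, ‖gradient F (Xbar t)‖ ^ 2 + (1 - L * α) * ‖gbar t‖ ^ 2 ≤
      2 / α * (F (Xbar t) - F (Xbar (t + 1))) + L ^ 2 / N * ∑ i, ‖Xbar t - X t i‖ ^ 2 := by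
    intro t
    have hgap : ‖gradient F (Xbar t) - gbar t‖ ^ 2 ≤ L ^ 2 / N * ∑ i, ‖Xbar t - X t i‖ ^ 2 := by
      have := norm_average_sub_average_sq_le hsmooth (Xbar t) (X t)
      rwa [hcard, hLK, ← (hgradF _).gradient, mul_one_div, ← congrFun hgbar t] at this
    have hdesc := inexact_gradient_step hFdiff hFlip (Xbar t) (gbar t) hα0
    rw [hLK, ← hmean] at hdesc
    linarith
  calc _ ≤ 2 / α * (F (Xbar 1) - F xstar) + ∑ t ∈ Icc 1 T, L ^ 2 / N * ∑ i, ‖Xbar t - X t i‖ ^ 2 :=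
        sum_Icc_le_of_le_mul_sub_succ (by positivity) hstep (fun t => hxstar _) hT
    _ = _ := by rw [mul_sum]

theorem mile_descent_sum_bound
    (n N : ℕ) (hn : 0 < n) (hN : 2 ≤ N)
    (f : Fin N → EuclideanSpace ℝ (Fin n) → ℝ)
    (L : ℝ) (hL : 0 < L)
    (hdiff : ∀ i, Differentiable ℝ (f i))
    (hsmooth : ∀ i, LipschitzWith L.toNNReal (gradient (f i)))
    (F : EuclideanSpace ℝ (Fin n) → ℝ)
    (hF : F = fun x => (1 / (N : ℝ)) * ∑ i, f i x)
    (xstar : EuclideanSpace ℝ (Fin n))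
    (hxstar : ∀ x, F xstar ≤ F x)
    (W : Matrix (Fin N) (Fin N) ℝ)
    (hWsymm : W.IsSymm)
    (hWnull : ∀ v : Fin N → ℝ, ((1 : Matrix (Fin N) (Fin N) ℝ) - W).mulVec v = 0 ↔ ∃ c : ℝ, v = fun _ => c)
    (hWpsd : (2 • (1 : Matrix (Fin N) (Fin N) ℝ) - (W + 1)).PosSemidef)
    (hWpd : (W + 1).PosDef)
    (τ : ℕ) (hτ : 0 < τ)
    (ξ : ℝ) (hξ0 : 0 < ξ) (hξ1 : ξ < 2 / ((τ : ℝ) + 3))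
    (α : ℝ) (hα0 : 0 < α)
    (Wt : ℕ → Matrix (Fin N) (Fin N) ℝ)
    (hWt : Wt = fun t => if τ ∣ t then (1 - ξ) • (1 : Matrix (Fin N) (Fin N) ℝ) + ξ • W else 1)
    (Xm1 : Fin N → EuclideanSpace ℝ (Fin n))
    (X : ℕ → Fin N → EuclideanSpace ℝ (Fin n))
    (hX0 : ∀ i, X 0 i = Xm1 i - α • gradient (f i) (Xm1 i))
    (hX1 : ∀ j, X 1 j = ∑ i, Wt 0 i j •
        (2 • X 0 i - Xm1 i - α • gradient (f i) (X 0 i) + α • gradient (f i) (Xm1 i)))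
    (hXrec : ∀ t : ℕ, ∀ j, X (t + 2) j = ∑ i, Wt (t + 1) i j •
        (2 • X (t + 1) i - X t i - α • gradient (f i) (X (t + 1) i) + α • gradient (f i) (X t i)))
    (Xbar : ℕ → EuclideanSpace ℝ (Fin n))
    (hXbar : Xbar = fun t => (1 / (N : ℝ)) • ∑ i, X t i)
    (gbar : ℕ → EuclideanSpace ℝ (Fin n))
    (hgbar : gbar = fun t => (1 / (N : ℝ)) • ∑ i, gradient (f i) (X t i))
    (T : ℕ) (hT : 1 ≤ T) :
    ∑ t ∈ Finset.Icc 1 T, (‖gradient F (Xbar t)‖ ^ 2 + (1 - L * α) * ‖gbar t‖ ^ 2) ≤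
      2 / α * (F (Xbar 1) - F xstar)
      + L ^ 2 / N * ∑ t ∈ Finset.Icc 1 T, ∑ i, ‖Xbar t - X t i‖ ^ 2 :=
  mile_descent_sum_bound_general n N f L hL hdiff hsmooth F hF xstar hxstar W hWnull τ ξ α hα0 Wt
    hWt Xm1 X hX0 hX1 hXrec Xbar hXbar gbar hgbar T hT
end
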